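/- Let X be a transitive d-dimensional shift of maximality type 1 that is not of finite type. Then X is an isolated point of the space T^d of transitive d-dimensional shifts if and only if there exists a shift of finite type Z with X ⊆ Z such that Z \ X is not dense in Z. -/

import Mathlib

/-- The group `ℤ^d`. -/
abbrev ZD (d : ℕ) := Fin d → ℤ

/-- A configuration is a map `ℤ^d → ℤ`. -/
abbrev Config (d : ℕ) := ZD d → ℤ

/-- The shift map `σ^u`, defined by `σ^u(x)_v = x_{u+v}`. -/
def shiftMap {d : ℕ} (u : ZD d) (x : Config d) : Config d := fun v => x (u + v)

/-- The sup norm `‖·‖_∞` on `ℤ^d`, valued in `ℕ`. -/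
def normInf {d : ℕ} (n : ZD d) : ℕ := Finset.univ.sup fun i => (n i).natAbs

open Classical in
/-- The metric `δ` on configurations: `δ(x,y) = 2^{-min{‖n‖_∞ : x_n ≠ y_n}}`, `δ(x,x) = 0`. -/
noncomputable def deltaDist {d : ℕ} (x y : Config d) : ℝ :=
  if x = y then 0
  else (2 : ℝ) ^ (-((sInf {m : ℕ | ∃ n : ZD d, normInf n = m ∧ x n ≠ y n} : ℕ) : ℤ))

/-- The closure of a set of configurations with respect to the metric `δ`. -/
def deltaClosure {d : ℕ} (A : Set (Config d)) : Set (Config d) :=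
  {x | ∀ ε : ℝ, 0 < ε → ∃ a ∈ A, deltaDist x a < ε}

/-- A set of configurations is closed for `δ` when it contains all its limit points. -/
def IsDeltaClosed {d : ℕ} (A : Set (Config d)) : Prop := deltaClosure A ⊆ A

/-- A `d`-dimensional shift: a nonempty set of configurations over a common finite
alphabet, closed for `δ` and invariant under every shift map. -/
def IsShift {d : ℕ} (X : Set (Config d)) : Prop :=
  X.Nonempty ∧ (∃ A : Finset ℤ, ∀ x ∈ X, ∀ v : ZD d, x v ∈ A) ∧ IsDeltaClosed X ∧
    ∀ u : ZD d, ∀ x ∈ X, shiftMap u x ∈ X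

/-- The Hausdorff metric `δ_H` on the space of shifts. -/
noncomputable def deltaH {d : ℕ} (X Z : Set (Config d)) : ℝ :=
  max (⨆ x : X, ⨅ z : Z, deltaDist (x : Config d) (z : Config d))
      (⨆ z : Z, ⨅ x : X, deltaDist (x : Config d) (z : Config d))

/-- A subsystem of a shift `X`: a nonempty closed shift-invariant subset of `X`. -/
def IsSubsystem {d : ℕ} (Z X : Set (Config d)) : Prop :=
  Z.Nonempty ∧ Z ⊆ X ∧ IsDeltaClosed Z ∧ ∀ u : ZD d, ∀ z ∈ Z, shiftMap u z ∈ Z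

/-- A maximal subsystem of `X`: a proper subsystem such that any subsystem strictly
between it and `X` equals `X`. -/
def IsMaximalSubsystem {d : ℕ} (Z X : Set (Config d)) : Prop :=
  IsSubsystem Z X ∧ Z ≠ X ∧ ∀ Z', IsSubsystem Z' X → Z ⊂ Z' → Z' = X

/-- An outcast of `X`: a proper subsystem contained in no maximal subsystem of `X`. -/
def IsOutcast {d : ℕ} (Z X : Set (Config d)) : Prop :=
  IsSubsystem Z X ∧ Z ≠ X ∧ ∀ M, IsMaximalSubsystem M X → ¬ Z ⊆ M

/-- A pattern with finite support `U` (given by the values of `p` on `U`) appears in the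
configuration `x`. -/
def PatternAppears {d : ℕ} (U : Finset (ZD d)) (p : ZD d → ℤ) (x : Config d) : Prop :=
  ∃ u : ZD d, ∀ v ∈ U, x (u + v) = p v

/-- The set of configurations over the alphabet `A` avoiding every pattern in `F`. -/
def XofF {d : ℕ} (A : Finset ℤ) (F : Set (Finset (ZD d) × (ZD d → ℤ))) : Set (Config d) :=
  {x | (∀ v : ZD d, x v ∈ A) ∧ ∀ q ∈ F, ¬ PatternAppears q.1 q.2 x}

/-- A shift of finite type: defined by a finite alphabet and a finite set of forbidden
patterns. -/
def IsSFT {d : ℕ} (X : Set (Config d)) : Prop :=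
  ∃ (A : Finset ℤ) (F : Finset (Finset (ZD d) × (ZD d → ℤ))), X = XofF A (F : Set _)

/-- `X` is an isolated point of the subspace `S` (with the Hausdorff metric `δ_H`). -/
def IsolatedIn {d : ℕ} (S : Set (Set (Config d))) (X : Set (Config d)) : Prop :=
  X ∈ S ∧ ∃ ε : ℝ, 0 < ε ∧ ∀ Z ∈ S, deltaH X Z < ε → Z = X

/-- The orbit of a configuration under the shift action. -/
def orbit {d : ℕ} (x : Config d) : Set (Config d) := {y | ∃ u : ZD d, y = shiftMap u x}

/-- A shift is transitive when some point has dense orbit. -/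
def IsTransitive {d : ℕ} (X : Set (Config d)) : Prop :=
  IsShift X ∧ ∃ x ∈ X, X ⊆ deltaClosure (orbit x)

/-- A shift is minimal when its only subsystem is itself. -/
def IsMinimalShift {d : ℕ} (X : Set (Config d)) : Prop :=
  IsShift X ∧ ∀ Z, IsSubsystem Z X → Z = X


/-!
Call the restrictions of the configurations of a shift `Y` to the ball of radius `N` its
`N`-windows. Two shifts are `2^{-N}`-close for `δ_H` exactly when they have the same `N`-windows,
so `X` is isolated in `T^d` iff, for some `N`, no other transitive shift has the `N`-windows of `X`.

If `X` is isolated, take for `Z` the shift of finite type `X_N` forbidding the `N`-windows that do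
not occur in `X`. Were `Z \ X` dense in `Z`, some `w ∈ Z \ X` would agree with a transitive point
of `X` on a ball so large that every `N`-window of `X` occurs in it; the orbit closure of `w` would
then be a transitive shift other than `X` with the `N`-windows of `X`.

Conversely, let `z₀ ∈ Z` lie outside the closure of `Z \ X`. For large `N`, a transitive `Y` with
the `N`-windows of `X` lies in `Z`, and its transitive point lies in `X`: otherwise `Y` would lie in
the closure of `Z \ X` while containing a point that agrees with `z₀` on a large ball. So `Y ⊆ X`.
If `Y ≠ X`, then `Y ∪ M` is a subsystem strictly between the maximal subsystem `M` and `X` unless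
`Y ⊆ M`; but `Y` also has the `N`-window of a point of `X` far from `M`.
-/

section

variable {d : ℕ}

lemma deltaDist_nonneg (x y : Config d) : 0 ≤ deltaDist x y := by
  unfold deltaDist
  split <;> positivity

lemma deltaDist_le_one (x y : Config d) : deltaDist x y ≤ 1 := by
  unfold deltaDist
  split
  · exact zero_le_one
  · exact zpow_le_one_of_nonpos₀ one_le_two (by omega)

lemma normInf_zero : normInf (0 : ZD d) = 0 := by
  simp [normInf]

lemma le_normInf (u : ZD d) (i : Fin d) : (u i).natAbs ≤ normInf u :=
  Finset.le_sup (f := fun i => (u i).natAbs) (Finset.mem_univ i)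

lemma normInf_add_le (u v : ZD d) : normInf (u + v) ≤ normInf u + normInf v :=
  Finset.sup_le fun i _ =>
    (Int.natAbs_add_le _ _).trans (add_le_add (le_normInf u i) (le_normInf v i))

lemma shiftMap_zero (x : Config d) : shiftMap 0 x = x := by
  funext v
  simp [shiftMap]

lemma shiftMap_shiftMap (u v : ZD d) (x : Config d) :
    shiftMap u (shiftMap v x) = shiftMap (v + u) x := by
  funext w
  simp [shiftMap, add_assoc]

lemma mem_of_shiftMap_mem {X : Set (Config d)} (hinv : ∀ u : ZD d, ∀ x ∈ X, shiftMap u x ∈ X)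
    {u : ZD d} {x : Config d} (h : shiftMap u x ∈ X) : x ∈ X := by
  simpa [shiftMap_shiftMap, shiftMap_zero] using hinv (-u) _ h

section AgreeOn

def AgreeOn (N : ℕ) (x y : Config d) : Prop := ∀ n : ZD d, normInf n ≤ N → x n = y n

variable {N : ℕ} {x y z : Config d}

lemma AgreeOn.refl (N : ℕ) (x : Config d) : AgreeOn N x x := fun _ _ => rfl

lemma AgreeOn.symm (h : AgreeOn N x y) : AgreeOn N y x := fun n hn => (h n hn).symm

lemma AgreeOn.trans (h₁ : AgreeOn N x y) (h₂ : AgreeOn N y z) : AgreeOn N x z :=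
  fun n hn => (h₁ n hn).trans (h₂ n hn)

lemma AgreeOn.mono {M : ℕ} (h : AgreeOn N x y) (hMN : M ≤ N) : AgreeOn M x y :=
  fun n hn => h n (hn.trans hMN)

lemma AgreeOn.shiftMap {K : ℕ} (h : AgreeOn K x y) {u : ZD d} (hu : normInf u + N ≤ K) :
    AgreeOn N (shiftMap u x) (shiftMap u y) :=
  fun n hn => h (u + n) ((normInf_add_le u n).trans (by omega))

lemma agreeOn_of_deltaDist_lt (h : deltaDist x y < 2 ^ (-(N : ℤ))) : AgreeOn N x y := by
  intro n hn
  by_contra hne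
  have hxy : x ≠ y := fun he => hne (by rw [he])
  rw [deltaDist, if_neg hxy] at h
  have hlt := (zpow_lt_zpow_iff_right₀ one_lt_two).1 h
  have hle : sInf {m : ℕ | ∃ n : ZD d, normInf n = m ∧ x n ≠ y n} ≤ normInf n :=
    Nat.sInf_le ⟨n, rfl, hne⟩
  omega

lemma deltaDist_le_of_agreeOn (h : AgreeOn N x y) : deltaDist x y ≤ 2 ^ (-(N + 1 : ℤ)) := by
  rw [deltaDist]
  split
  · positivity
  · rename_i hxy
    obtain ⟨n, hn⟩ := Function.ne_iff.1 hxy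
    obtain ⟨n₀, hn₀, hne₀⟩ :=
      Nat.sInf_mem (s := {m : ℕ | ∃ n : ZD d, normInf n = m ∧ x n ≠ y n}) ⟨_, n, rfl, hn⟩
    have hlt : N < normInf n₀ := lt_of_not_ge fun hle => hne₀ (h n₀ hle)
    exact zpow_le_zpow_right₀ one_le_two (by omega)

end AgreeOn

lemma exists_two_zpow_neg_lt {ε : ℝ} (hε : 0 < ε) : ∃ N : ℕ, (2 : ℝ) ^ (-(N : ℤ)) < ε := by
  obtain ⟨N, hN⟩ := exists_pow_lt_of_lt_one hε (by norm_num : (2⁻¹ : ℝ) < 1)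
  exact ⟨N, by rwa [zpow_neg, zpow_natCast, ← inv_pow]⟩

section Closure

variable {A B : Set (Config d)} {x t : Config d}

lemma mem_deltaClosure_iff : x ∈ deltaClosure A ↔ ∀ N : ℕ, ∃ a ∈ A, AgreeOn N x a := by
  refine ⟨fun h N => ?_, fun h ε hε => ?_⟩
  · obtain ⟨a, ha, hxa⟩ := h _ (zpow_pos two_pos (-(N : ℤ)))
    exact ⟨a, ha, agreeOn_of_deltaDist_lt hxa⟩
  · obtain ⟨N, hN⟩ := exists_two_zpow_neg_lt hε
    obtain ⟨a, ha, hxa⟩ := h N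
    refine ⟨a, ha, (deltaDist_le_of_agreeOn hxa).trans_lt (lt_trans ?_ hN)⟩
    exact zpow_lt_zpow_right₀ one_lt_two (by omega)

lemma subset_deltaClosure (A : Set (Config d)) : A ⊆ deltaClosure A :=
  fun a ha => mem_deltaClosure_iff.2 fun N => ⟨a, ha, AgreeOn.refl N a⟩

lemma deltaClosure_mono (h : A ⊆ B) : deltaClosure A ⊆ deltaClosure B := fun _ hx ε hε =>
  let ⟨a, ha, hxa⟩ := hx ε hε
  ⟨a, h ha, hxa⟩

lemma isDeltaClosed_deltaClosure (A : Set (Config d)) : IsDeltaClosed (deltaClosure A) := by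
  intro x hx
  rw [mem_deltaClosure_iff] at hx ⊢
  intro N
  obtain ⟨b, hb, hxb⟩ := hx N
  obtain ⟨a, ha, hba⟩ := mem_deltaClosure_iff.1 hb N
  exact ⟨a, ha, hxb.trans hba⟩

lemma deltaClosure_union_subset (A B : Set (Config d)) :
    deltaClosure (A ∪ B) ⊆ deltaClosure A ∪ deltaClosure B := by
  intro x hx
  by_contra! hxAB
  obtain ⟨hxA, hxB⟩ := not_or.1 hxAB
  obtain ⟨N₁, hN₁⟩ := not_forall.1 (mt mem_deltaClosure_iff.2 hxA)
  obtain ⟨N₂, hN₂⟩ := not_forall.1 (mt mem_deltaClosure_iff.2 hxB)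
  obtain ⟨a, ha | ha, hxa⟩ := mem_deltaClosure_iff.1 hx (max N₁ N₂)
  · exact hN₁ ⟨a, ha, hxa.mono (le_max_left _ _)⟩
  · exact hN₂ ⟨a, ha, hxa.mono (le_max_right _ _)⟩

lemma exists_forall_agreeOn_notMem_deltaClosure (hx : x ∉ deltaClosure A) :
    ∃ N₀, ∀ N ≥ N₀, ∀ y, AgreeOn N x y → y ∉ deltaClosure A := by
  obtain ⟨N₀, hN₀⟩ := not_forall.1 (mt mem_deltaClosure_iff.2 hx)
  refine ⟨N₀, fun N hN y hxy hy => hN₀ ?_⟩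
  obtain ⟨a, ha, hya⟩ := mem_deltaClosure_iff.1 hy N₀
  exact ⟨a, ha, (hxy.mono hN).trans hya⟩

lemma shiftMap_mem_deltaClosure (hA : ∀ u : ZD d, ∀ a ∈ A, shiftMap u a ∈ A) (u : ZD d)
    (hx : x ∈ deltaClosure A) : shiftMap u x ∈ deltaClosure A := by
  refine mem_deltaClosure_iff.2 fun N => ?_
  obtain ⟨a, ha, hxa⟩ := mem_deltaClosure_iff.1 hx (normInf u + N)
  exact ⟨shiftMap u a, hA u a ha, hxa.shiftMap le_rfl⟩

lemma mem_orbit_self (x : Config d) : x ∈ orbit x := ⟨0, (shiftMap_zero x).symm⟩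

lemma shiftMap_mem_orbit (u : ZD d) {y : Config d} (hy : y ∈ orbit x) :
    shiftMap u y ∈ orbit x := by
  obtain ⟨v, rfl⟩ := hy
  exact ⟨v + u, shiftMap_shiftMap u v x⟩

lemma deltaClosure_orbit_subset (hAcl : IsDeltaClosed A)
    (hA : ∀ u : ZD d, ∀ a ∈ A, shiftMap u a ∈ A) (ht : t ∈ A) : deltaClosure (orbit t) ⊆ A := by
  refine (deltaClosure_mono ?_).trans hAcl
  rintro _ ⟨u, rfl⟩
  exact hA u t ht

lemma isTransitive_deltaClosure_orbit {A : Finset ℤ} (ht : ∀ v, t v ∈ A) :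
    IsTransitive (deltaClosure (orbit t)) := by
  have htY := subset_deltaClosure _ (mem_orbit_self t)
  refine ⟨⟨⟨t, htY⟩, ⟨A, fun y hy v => ?_⟩, isDeltaClosed_deltaClosure _,
    fun u _ => shiftMap_mem_deltaClosure (fun u _ => shiftMap_mem_orbit u) u⟩, t, htY, subset_rfl⟩
  obtain ⟨_, ⟨u, rfl⟩, hyu⟩ := mem_deltaClosure_iff.1 hy (normInf v)
  exact hyu v le_rfl ▸ ht (u + v)

end Closure

section Subsystem

variable {X Y M : Set (Config d)} {t : Config d}

lemma IsSubsystem.eq_of_mem (hY : IsSubsystem Y X) (ht : X ⊆ deltaClosure (orbit t))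
    (htY : t ∈ Y) : Y = X :=
  hY.2.1.antisymm (ht.trans (deltaClosure_orbit_subset hY.2.2.1 hY.2.2.2 htY))

lemma IsSubsystem.union (hY : IsSubsystem Y X) (hM : IsSubsystem M X) :
    IsSubsystem (Y ∪ M) X :=
  ⟨hY.1.mono Set.subset_union_left, Set.union_subset hY.2.1 hM.2.1,
    fun _ hx => (deltaClosure_union_subset Y M hx).imp (fun h => hY.2.2.1 h) fun h => hM.2.2.1 h,
    fun u z hz => hz.imp (hY.2.2.2 u z) (hM.2.2.2 u z)⟩

lemma IsMaximalSubsystem.subset_of_isSubsystem (hM : IsMaximalSubsystem M X) (htX : t ∈ X)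
    (ht : X ⊆ deltaClosure (orbit t)) (hY : IsSubsystem Y X) (hYX : Y ≠ X) : Y ⊆ M := by
  by_contra hYM
  have hUX : Y ∪ M = X := hM.2.2 _ (hY.union hM.1) (Set.ssubset_union_right_iff.2 hYM)
  rcases hUX.symm ▸ htX with htY | htM
  · exact hYX (hY.eq_of_mem ht htY)
  · exact hM.2.1 (hM.1.eq_of_mem ht htM)

end Subsystem

section Windows

def window (N : ℕ) (x : Config d) : Config d := fun v => if normInf v ≤ N then x v else 0

noncomputable def normBall (d N : ℕ) : Finset (ZD d) :=
  Fintype.piFinset fun _ => Finset.Icc (-(N : ℤ)) N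

variable {N : ℕ} {x y : Config d}

lemma mem_normBall {v : ZD d} : v ∈ normBall d N ↔ normInf v ≤ N := by
  simp only [normBall, Fintype.mem_piFinset, Finset.mem_Icc, normInf, Finset.sup_le_iff,
    Finset.mem_univ, true_implies]
  exact forall_congr' fun i => by omega

lemma window_eq_window_iff : window N x = window N y ↔ AgreeOn N x y := by
  refine ⟨fun h n hn => by simpa [window, hn] using congrFun h n, fun h => funext fun v => ?_⟩
  by_cases hv : normInf v ≤ N <;> simp [window, hv, h v]

lemma finite_window_image (N : ℕ) (A : Finset ℤ) :
    (window N '' {z : Config d | ∀ v, z v ∈ A}).Finite := by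
  classical
  let extend : (normBall d N → ℤ) → Config d :=
    fun f v => if h : v ∈ normBall d N then f ⟨v, h⟩ else 0
  refine ((Set.Finite.pi fun _ => A.finite_toSet).image extend).subset ?_
  rintro _ ⟨z, hz, rfl⟩
  refine ⟨fun v => z v, fun v _ => hz v, funext fun v => ?_⟩
  by_cases hv : normInf v ≤ N <;> simp [extend, window, mem_normBall, hv]

lemma patternAppears_normBall_window_iff {z : Config d} :
    PatternAppears (normBall d N) (window N z) x ↔ ∃ u, AgreeOn N (shiftMap u x) z := by
  simp only [PatternAppears, AgreeOn, mem_normBall, window, shiftMap]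
  exact exists_congr fun u => forall₂_congr fun v hv => by rw [if_pos hv]

end Windows

section Hausdorff

lemma iSup_iInf_le_of_forall_exists_le {α β : Type*} {f : α → β → ℝ} {c : ℝ}
    (h₀ : ∀ a b, 0 ≤ f a b) (hc : 0 ≤ c)
    (h : ∀ a, ∃ b, f a b ≤ c) : ⨆ a, ⨅ b, f a b ≤ c := by
  refine Real.iSup_le (fun a => ?_) hc
  obtain ⟨b, hb⟩ := h a
  exact (ciInf_le ⟨0, Set.forall_mem_range.2 (h₀ a)⟩ b).trans hb

lemma exists_lt_of_iSup_iInf_lt {α β : Type*} [Nonempty β] {f : α → β → ℝ} {C ε : ℝ}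
    (h₀ : ∀ a b, 0 ≤ f a b) (hC : ∀ a b, f a b ≤ C) (h : ⨆ a, ⨅ b, f a b < ε) (a : α) :
    ∃ b, f a b < ε := by
  have hbdd : BddAbove (Set.range fun a => ⨅ b, f a b) :=
    ⟨C, Set.forall_mem_range.2 fun a =>
      (ciInf_le ⟨0, Set.forall_mem_range.2 (h₀ a)⟩ (Classical.arbitrary β)).trans (hC _ _)⟩
  exact exists_lt_of_ciInf_lt ((le_ciSup hbdd a).trans_lt h)

variable {N : ℕ} {X Y : Set (Config d)}

lemma deltaH_lt_of_window_image_eq (h : window N '' X = window N '' Y) :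
    deltaH X Y < 2 ^ (-(N : ℤ)) := by
  have hc : (0 : ℝ) ≤ 2 ^ (-(N + 1 : ℤ)) := by positivity
  refine (max_le (iSup_iInf_le_of_forall_exists_le (fun _ _ => deltaDist_nonneg _ _) hc fun x => ?_)
    (iSup_iInf_le_of_forall_exists_le (fun _ _ => deltaDist_nonneg _ _) hc fun y => ?_)).trans_lt
      (zpow_lt_zpow_right₀ one_lt_two (by omega))
  · obtain ⟨y, hy, hyx⟩ : window N x ∈ window N '' Y := h ▸ Set.mem_image_of_mem _ x.2
    exact ⟨⟨y, hy⟩, deltaDist_le_of_agreeOn (window_eq_window_iff.1 hyx).symm⟩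
  · obtain ⟨x, hx, hxy⟩ : window N y ∈ window N '' X := h ▸ Set.mem_image_of_mem _ y.2
    exact ⟨⟨x, hx⟩, deltaDist_le_of_agreeOn (window_eq_window_iff.1 hxy)⟩

lemma window_image_eq_of_deltaH_lt (hX : X.Nonempty) (hY : Y.Nonempty)
    (h : deltaH X Y < 2 ^ (-(N : ℤ))) : window N '' X = window N '' Y := by
  have : Nonempty X := hX.to_subtype
  have : Nonempty Y := hY.to_subtype
  unfold deltaH at h
  obtain ⟨hXY, hYX⟩ := max_lt_iff.1 h
  replace hXY : ∀ x : X, ∃ y : Y, deltaDist (x : Config d) y < 2 ^ (-(N : ℤ)) :=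
    exists_lt_of_iSup_iInf_lt (fun _ _ => deltaDist_nonneg _ _)
      (fun _ _ => deltaDist_le_one _ _) hXY
  replace hYX : ∀ y : Y, ∃ x : X, deltaDist (x : Config d) y < 2 ^ (-(N : ℤ)) :=
    exists_lt_of_iSup_iInf_lt (fun _ _ => deltaDist_nonneg _ _)
      (fun _ _ => deltaDist_le_one _ _) hYX
  apply Set.Subset.antisymm
  · rintro _ ⟨x, hx, rfl⟩
    obtain ⟨y, hxy⟩ := hXY ⟨x, hx⟩
    exact ⟨y, y.2, (window_eq_window_iff.2 (agreeOn_of_deltaDist_lt hxy)).symm⟩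
  · rintro _ ⟨y, hy, rfl⟩
    obtain ⟨x, hxy⟩ := hYX ⟨y, hy⟩
    exact ⟨x, x.2, window_eq_window_iff.2 (agreeOn_of_deltaDist_lt hxy)⟩

lemma isolatedIn_iff_exists_window {S : Set (Set (Config d))} (hS : ∀ Y ∈ S, Y.Nonempty) :
    IsolatedIn S X ↔ X ∈ S ∧ ∃ N, ∀ Y ∈ S, window N '' Y = window N '' X → Y = X := by
  refine and_congr_right fun hX => ⟨fun ⟨ε, hε, hiso⟩ => ?_, fun ⟨N, hN⟩ => ?_⟩
  · obtain ⟨N, hN⟩ := exists_two_zpow_neg_lt hε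
    exact ⟨N, fun Y hY hYX => hiso Y hY ((deltaH_lt_of_window_image_eq hYX.symm).trans hN)⟩
  · exact ⟨2 ^ (-(N : ℤ)), by positivity, fun Y hY hXY =>
      hN Y hY (window_image_eq_of_deltaH_lt (hS X hX) (hS Y hY) hXY).symm⟩

end Hausdorff

section FiniteType

variable {A : Finset ℤ} {F : Set (Finset (ZD d) × (ZD d → ℤ))}

lemma shiftMap_mem_XofF {x : Config d} (hx : x ∈ XofF A F) (u : ZD d) :
    shiftMap u x ∈ XofF A F := by
  refine ⟨fun v => hx.1 (u + v), fun q hq ⟨w, hw⟩ => hx.2 q hq ⟨u + w, fun v hv => ?_⟩⟩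
  rw [add_assoc]
  exact hw v hv

lemma isDeltaClosed_XofF (A : Finset ℤ) (F : Set (Finset (ZD d) × (ZD d → ℤ))) :
    IsDeltaClosed (XofF A F) := by
  intro x hx
  rw [mem_deltaClosure_iff] at hx
  refine ⟨fun v => ?_, fun q hq ⟨u, hu⟩ => ?_⟩
  · obtain ⟨a, ha, hxa⟩ := hx (normInf v)
    exact hxa v le_rfl ▸ ha.1 v
  · obtain ⟨a, ha, hxa⟩ := hx (q.1.sup fun v => normInf (u + v))
    refine ha.2 q hq ⟨u, fun v hv => ?_⟩
    rw [← hxa (u + v) (Finset.le_sup (f := fun v => normInf (u + v)) hv)]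
    exact hu v hv

lemma isShift_XofF (hne : (XofF A F).Nonempty) : IsShift (XofF A F) :=
  ⟨hne, ⟨A, fun _ hx => hx.1⟩, isDeltaClosed_XofF A F, fun u _ hx => shiftMap_mem_XofF hx u⟩

lemma mem_XofF_of_forall_agreeOn {N : ℕ} (hF : ∀ q ∈ F, ∀ v ∈ q.1, normInf v ≤ N)
    {y : Config d} (hy : ∀ u, ∃ x ∈ XofF A F, AgreeOn N (shiftMap u y) x) : y ∈ XofF A F := by
  refine ⟨fun v => ?_, fun q hq ⟨u, hu⟩ => ?_⟩
  · obtain ⟨x, hx, hyx⟩ := hy v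
    have h₀ := hyx 0 (normInf_zero.trans_le (Nat.zero_le N))
    simp only [shiftMap, add_zero] at h₀
    exact h₀ ▸ hx.1 0
  · obtain ⟨x, hx, hyx⟩ := hy u
    refine hx.2 q hq ⟨0, fun v hv => ?_⟩
    rw [zero_add, ← hyx v (hF q hq v hv)]
    exact hu v hv

lemma subset_XofF_of_window_image_subset {N : ℕ} (hF : ∀ q ∈ F, ∀ v ∈ q.1, normInf v ≤ N)
    {X Y : Set (Config d)} (hXZ : X ⊆ XofF A F) (hYinv : ∀ u : ZD d, ∀ y ∈ Y, shiftMap u y ∈ Y)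
    (hYX : window N '' Y ⊆ window N '' X) : Y ⊆ XofF A F := by
  refine fun y hy => mem_XofF_of_forall_agreeOn hF fun u => ?_
  obtain ⟨x, hx, hxy⟩ := hYX (Set.mem_image_of_mem _ (hYinv u y hy))
  exact ⟨x, hXZ hx, (window_eq_window_iff.1 hxy).symm⟩

end FiniteType

section Approximation

def sftApprox (N : ℕ) (A : Finset ℤ) (X : Set (Config d)) : Set (Config d) :=
  XofF A ((normBall d N, ·) '' (window N '' {z | ∀ v, z v ∈ A} \ window N '' X))

variable {N : ℕ} {A : Finset ℤ} {X : Set (Config d)}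

lemma isSFT_sftApprox (N : ℕ) (A : Finset ℤ) (X : Set (Config d)) :
    IsSFT (sftApprox N A X) := by
  have hfin := ((finite_window_image N A).sdiff (t := window N '' X)).image (normBall d N, ·)
  exact ⟨A, hfin.toFinset, by rw [hfin.coe_toFinset]; rfl⟩

lemma subset_sftApprox (hA : ∀ x ∈ X, ∀ v, x v ∈ A)
    (hinv : ∀ u : ZD d, ∀ x ∈ X, shiftMap u x ∈ X) : X ⊆ sftApprox N A X := by
  refine fun x hx => ⟨hA x hx, ?_⟩
  rintro _ ⟨_, ⟨⟨z, -, rfl⟩, hzX⟩, rfl⟩ happ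
  obtain ⟨u, hu⟩ := patternAppears_normBall_window_iff.1 happ
  exact hzX ⟨shiftMap u x, hinv u x hx, window_eq_window_iff.2 hu⟩

lemma exists_agreeOn_of_mem_sftApprox {z : Config d} (hz : z ∈ sftApprox N A X) :
    ∃ x ∈ X, AgreeOn N z x := by
  by_contra! h
  refine hz.2 _ ⟨window N z, ⟨⟨z, hz.1, rfl⟩, ?_⟩, rfl⟩
    (patternAppears_normBall_window_iff.2 ⟨0, by rw [shiftMap_zero]; exact AgreeOn.refl N z⟩)
  rintro ⟨x, hx, hxz⟩
  exact h x hx (window_eq_window_iff.1 hxz.symm)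

lemma exists_radius_forall_agreeOn_shiftMap {t : Config d} (hfin : (window N '' X).Finite)
    (ht : X ⊆ deltaClosure (orbit t)) :
    ∃ K, ∀ x ∈ X, ∃ u, normInf u + N ≤ K ∧ AgreeOn N x (shiftMap u t) := by
  have hU : ∀ p ∈ window N '' X, ∃ u, window N (shiftMap u t) = p := by
    rintro _ ⟨x, hx, rfl⟩
    obtain ⟨_, ⟨u, rfl⟩, hxu⟩ := mem_deltaClosure_iff.1 (ht hx) N
    exact ⟨u, (window_eq_window_iff.2 hxu).symm⟩
  choose! U hU using hU
  refine ⟨hfin.toFinset.sup (normInf ∘ U) + N, fun x hx => ⟨U (window N x), ?_, ?_⟩⟩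
  · exact Nat.add_le_add_right
      (Finset.le_sup (f := normInf ∘ U) (hfin.mem_toFinset.2 ⟨x, hx, rfl⟩)) N
  · exact window_eq_window_iff.1 (hU _ ⟨x, hx, rfl⟩).symm

lemma exists_isTransitive_ne_of_mem_deltaClosure_sftApprox_diff {t : Config d}
    (hA : ∀ x ∈ X, ∀ v, x v ∈ A) (ht : X ⊆ deltaClosure (orbit t))
    (htZ : t ∈ deltaClosure (sftApprox N A X \ X)) :
    ∃ Y, IsTransitive Y ∧ window N '' Y = window N '' X ∧ Y ≠ X := by
  obtain ⟨K, hK⟩ :=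
    exists_radius_forall_agreeOn_shiftMap ((finite_window_image N A).subset (Set.image_mono hA)) ht
  obtain ⟨w, ⟨hwZ, hwX⟩, htw⟩ := mem_deltaClosure_iff.1 htZ K
  have hYZ : deltaClosure (orbit w) ⊆ sftApprox N A X :=
    deltaClosure_orbit_subset (isDeltaClosed_XofF _ _) (fun u _ hx => shiftMap_mem_XofF hx u) hwZ
  refine ⟨deltaClosure (orbit w), isTransitive_deltaClosure_orbit hwZ.1, ?_,
    fun hYX => hwX (hYX ▸ subset_deltaClosure _ (mem_orbit_self w))⟩
  apply Set.Subset.antisymm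
  · rintro _ ⟨y, hy, rfl⟩
    obtain ⟨x, hx, hyx⟩ := exists_agreeOn_of_mem_sftApprox (hYZ hy)
    exact ⟨x, hx, (window_eq_window_iff.2 hyx).symm⟩
  · rintro _ ⟨x, hx, rfl⟩
    obtain ⟨u, hu, hxu⟩ := hK x hx
    refine ⟨shiftMap u w, subset_deltaClosure _ (shiftMap_mem_orbit u (mem_orbit_self w)), ?_⟩
    exact (window_eq_window_iff.2 (hxu.trans (htw.shiftMap hu))).symm

end Approximation

lemma exists_window_image_eq_imp_eq {X Z M : Set (Config d)} {z₀ : Config d}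
    (hX : IsTransitive X) (hM : IsMaximalSubsystem M X) (hZ : IsSFT Z) (hXZ : X ⊆ Z)
    (hz₀Z : z₀ ∈ Z) (hz₀ : z₀ ∉ deltaClosure (Z \ X)) :
    ∃ N, ∀ Y, IsTransitive Y → window N '' Y = window N '' X → Y = X := by
  obtain ⟨⟨-, -, hXcl, hXinv⟩, t, htX, ht⟩ := hX
  obtain ⟨A, F, rfl⟩ := hZ
  obtain ⟨R, hR⟩ : ∃ R, ∀ q ∈ F, ∀ v ∈ q.1, normInf v ≤ R :=
    ⟨F.sup fun q => q.1.sup normInf, fun q hq v hv =>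
      (Finset.le_sup hv).trans (Finset.le_sup (f := fun q => q.1.sup normInf) hq)⟩
  obtain ⟨x₁, hx₁X, hx₁M⟩ := Set.exists_of_ssubset (hM.1.2.1.ssubset_of_ne hM.2.1)
  obtain ⟨N₀, hN₀⟩ := exists_forall_agreeOn_notMem_deltaClosure hz₀
  obtain ⟨N₁, hN₁⟩ := exists_forall_agreeOn_notMem_deltaClosure fun h => hx₁M (hM.1.2.2.1 h)
  set N := max R (max N₀ N₁)
  refine ⟨N, ?_⟩
  rintro Y ⟨⟨hYne, -, hYcl, hYinv⟩, y, hyY, hy⟩ hYX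
  have hYZ : Y ⊆ XofF A F := subset_XofF_of_window_image_subset
    (fun q hq v hv => (hR q hq v hv).trans (le_max_left _ _)) hXZ hYinv hYX.le
  have hz₀X : z₀ ∈ X := by
    by_contra h
    exact hz₀ (subset_deltaClosure _ ⟨hz₀Z, h⟩)
  have hyX : y ∈ X := by
    by_contra hyX
    have hYZX : Y ⊆ deltaClosure (XofF A F \ X) := by
      refine hy.trans (deltaClosure_mono ?_)
      rintro _ ⟨u, rfl⟩
      exact ⟨hYZ (hYinv u y hyY), fun h => hyX (mem_of_shiftMap_mem hXinv h)⟩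
    obtain ⟨y₀, hy₀, hy₀z₀⟩ : window N z₀ ∈ window N '' Y := hYX ▸ Set.mem_image_of_mem _ hz₀X
    exact hN₀ N (by omega) y₀ (window_eq_window_iff.1 hy₀z₀).symm (hYZX hy₀)
  by_contra hne
  have hYM : Y ⊆ M := hM.subset_of_isSubsystem htX ht
    ⟨hYne, hy.trans (deltaClosure_orbit_subset hXcl hXinv hyX), hYcl, hYinv⟩ hne
  obtain ⟨y₁, hy₁, hy₁x₁⟩ : window N x₁ ∈ window N '' Y := hYX ▸ Set.mem_image_of_mem _ hx₁X
  exact hN₁ N (by omega) y₁ (window_eq_window_iff.1 hy₁x₁).symm (subset_deltaClosure _ (hYM hy₁))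

end

theorem transitive_type_one_isolated_iff_general
    (d : ℕ) (X : Set (Config d)) (hX : IsTransitive X)
    (htype : ∃! M : Set (Config d), IsMaximalSubsystem M X) :
    IsolatedIn {Y : Set (Config d) | IsTransitive Y} X ↔
      ∃ Z : Set (Config d), IsShift Z ∧ IsSFT Z ∧ X ⊆ Z ∧
        ¬ Z ⊆ deltaClosure (Z \ X) := by
  rw [isolatedIn_iff_exists_window fun Y hY => hY.1.1]
  obtain ⟨⟨hXne, ⟨A, hA⟩, -, hXinv⟩, t, htX, ht⟩ := id hX
  have hXZ : ∀ N, X ⊆ sftApprox N A X := fun N => subset_sftApprox hA hXinv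
  constructor
  · rintro ⟨-, N, hN⟩
    refine ⟨sftApprox N A X, isShift_XofF (hXne.mono (hXZ N)), isSFT_sftApprox N A X, hXZ N,
      fun hdense => ?_⟩
    obtain ⟨Y, hY, hYX, hne⟩ :=
      exists_isTransitive_ne_of_mem_deltaClosure_sftApprox_diff hA ht (hdense (hXZ N htX))
    exact hne (hN Y hY hYX)
  · rintro ⟨Z, -, hZ, hXZ, hZX⟩
    obtain ⟨z₀, hz₀Z, hz₀⟩ := Set.not_subset.1 hZX
    obtain ⟨M, hM⟩ := htype.exists
    exact ⟨hX, exists_window_image_eq_imp_eq hX hM hZ hXZ hz₀Z hz₀⟩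

/-- A transitive shift of maximality type 1 which is not of finite type is
isolated in the space `T^d` of transitive shifts iff it is contained in a shift of
finite type `Z` such that `Z \ X` is not dense in `Z`. -/
theorem transitive_type_one_isolated_iff
    (d : ℕ) (hd : 1 ≤ d) (X : Set (Config d)) (hX : IsTransitive X)
    (htype : ∃! M : Set (Config d), IsMaximalSubsystem M X) (hnsft : ¬ IsSFT X) :
    IsolatedIn {Y : Set (Config d) | IsTransitive Y} X ↔
      ∃ Z : Set (Config d), IsShift Z ∧ IsSFT Z ∧ X ⊆ Z ∧
        ¬ Z ⊆ deltaClosure (Z \ X) :=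
  transitive_type_one_isolated_iff_general d X hX htype
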